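/- For a circulant graph C_n(a_1,…,a_p) with n odd and a_p < n/2, the product of the nonzero Laplacian eigenvalues equals 2^{n−1} · Π_{j=1}^{(n−1)/2} ( p − Σ_{k=1}^p cos(2π j a_k / n) )^2, provided the graph is connected. -/

import Mathlib

/-!
The Laplacian is the circulant matrix of the real even vector `2p·δ₀ − 1_{±a_k}` on `ZMod n`,
so conjugation by the discrete Fourier matrix diagonalises it, with eigenvalues
`λ_m = 2 (p − Σ_k cos (2π m a_k / n))`, `0 ≤ m < n`. Since `cos ≤ 1`, `λ_m = 0` forces
`n ∣ m a_k` for every `k`, hence `n ∣ m · gcd a`, which by connectivity means `m = 0`.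
Finally `λ_{n−m} = λ_m` and `n` is odd, so the `n − 1` nonzero eigenvalues pair up
into squares.
-/

open Polynomial Real

open scoped Classical in
/-- The combinatorial Laplacian of the circulant graph `C_n(a_1, …, a_p)`,
on vertex set `ZMod n`: vertices `u, v` are adjacent iff `u - v ≡ ±a_k (mod n)`. -/
noncomputable def lapCirculant (n p : ℕ) [NeZero n] (a : Fin p → ℕ) :
    Matrix (ZMod n) (ZMod n) ℝ :=
  fun u v =>
    if u = v then 2 * p
    else if ∃ k, u - v = (a k : ZMod n) ∨ v - u = (a k : ZMod n) then -1 else 0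

open Matrix ZMod

namespace ZMod

variable {N : ℕ} [NeZero N]

noncomputable def dftMatrix (N : ℕ) [NeZero N] : Matrix (ZMod N) (ZMod N) ℂ :=
  Matrix.of fun k j => stdAddChar (-(j * k))

theorem dftMatrix_mulVec (Φ : ZMod N → ℂ) : dftMatrix N *ᵥ Φ = 𝓕 Φ := by
  ext k
  simp [dftMatrix, mulVec, dotProduct, dft_apply]

theorem isUnit_dftMatrix : IsUnit (dftMatrix N) := by
  rw [← mulVec_injective_iff_isUnit, _root_.funext dftMatrix_mulVec]
  exact dft.injective

theorem dftMatrix_mul_circulant (v : ZMod N → ℂ) :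
    dftMatrix N * circulant v = diagonal (𝓕 v) * dftMatrix N := by
  ext k u
  rw [diagonal_mul, mul_apply, dft_apply, Finset.sum_mul]
  simp only [dftMatrix, of_apply, circulant_apply, smul_eq_mul]
  refine Fintype.sum_equiv (Equiv.subRight u) _ _ fun w => ?_
  rw [Equiv.subRight_apply, mul_right_comm, ← AddChar.map_add_eq_mul]
  ring_nf

theorem charpoly_circulant (v : ZMod N → ℂ) :
    (circulant v).charpoly = ∏ k, (X - C (𝓕 v k)) := by
  obtain ⟨D, hD⟩ := isUnit_dftMatrix (N := N)
  rw [← charpoly_units_conj D, hD, dftMatrix_mul_circulant, mul_assoc, ← hD, ← coe_units_inv,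
    Units.mul_inv, mul_one, charpoly_diagonal]

theorem charpoly_circulant_of_dft_eq_ofReal {v μ : ZMod N → ℝ}
    (h : 𝓕 (fun t => (v t : ℂ)) = fun k => (μ k : ℂ)) :
    (circulant v).charpoly = ∏ k, (X - C (μ k)) := by
  apply Polynomial.map_injective Complex.ofRealHom Complex.ofReal_injective
  rw [← charpoly_map, map_circulant, Polynomial.map_prod]
  simp [charpoly_circulant, h]

theorem stdAddChar_add_stdAddChar_neg (m : ℕ) :
    stdAddChar (m : ZMod N) + stdAddChar (-(m : ZMod N)) = (2 * cos (2 * π * m / N) : ℝ) := by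
  rw [← Int.cast_natCast, ← Int.cast_neg, stdAddChar_coe, stdAddChar_coe]
  push_cast
  rw [Complex.two_cos]
  ring_nf

end ZMod

theorem Polynomial.prod_filter_ne_zero_roots_prod_X_sub_C {ι R : Type*} [CommRing R] [IsDomain R]
    [DecidableEq R] (s : Finset ι) (f : ι → R) :
    ((∏ i ∈ s, (X - C (f i))).roots.filter (· ≠ 0)).prod =
      ∏ i ∈ s with f i ≠ 0, f i := by
  have hroots : (∏ i ∈ s, (X - C (f i))).roots = s.val.map f := by
    rw [← roots_multiset_prod_X_sub_C (s.val.map f), Multiset.map_map]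
    rfl
  rw [hroots, Multiset.filter_map, Finset.prod_eq_multiset_prod, Finset.filter_val]
  rfl

theorem Finset.prod_Ioo_zero_eq_prod_Icc_sq_of_odd {M : Type*} [CommMonoid M] {n : ℕ} (hn : Odd n)
    {f : ℕ → M} (hf : ∀ m < n, f (n - m) = f m) :
    ∏ m ∈ Ioo 0 n, f m = ∏ m ∈ Icc 1 ((n - 1) / 2), f m ^ 2 := by
  obtain ⟨r, rfl⟩ := hn
  have hreflect : ∏ m ∈ Ico (r + 1) (2 * r + 1), f m = ∏ m ∈ Ico 1 (r + 1), f m := calc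
    _ = ∏ m ∈ Ico (r + 1) (2 * r + 1), f (2 * r + 1 - m) :=
      (prod_congr rfl fun m hm => hf m (by simp at hm; omega)).symm
    _ = ∏ m ∈ Ico 1 (r + 1), f m := by
      rw [prod_Ico_reflect f (r + 1) (by omega)]
      congr 2 <;> omega
  rw [← Ico_add_one_left_eq_Ioo, zero_add,
    ← prod_Ico_consecutive f (by omega : 1 ≤ r + 1) (by omega), hreflect, ← sq, ← prod_pow,
    ← Ico_add_one_right_eq_Icc]
  congr 3
  omega

theorem Real.cos_two_pi_mul_natCast_div_eq_one_iff {n : ℕ} (hn : n ≠ 0) (j : ℕ) :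
    cos (2 * π * j / n) = 1 ↔ n ∣ j := by
  rw [Real.cos_eq_one_iff]
  constructor
  · rintro ⟨z, hz⟩
    have : (z : ℝ) * n = j := by
      field_simp at hz
      linarith
    exact_mod_cast (Int.natCast_dvd_natCast.mp ⟨z, by rw [mul_comm]; exact_mod_cast this.symm⟩)
  · rintro ⟨z, rfl⟩
    exact ⟨z, by push_cast; field_simp⟩

section Laplacian

variable {n p : ℕ} {a : Fin p → ℕ}

def signedJumps (n : ℕ) (a : Fin p → ℕ) : Fin p ⊕ Fin p → ZMod n :=
  Sum.elim (fun k => a k) (fun k => -a k)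

theorem signedJumps_ne_zero (hpos : ∀ k, 0 < a k) (hlt : ∀ k, 2 * a k < n)
    (x : Fin p ⊕ Fin p) : signedJumps n a x ≠ 0 := by
  have h (k : Fin p) : (a k : ZMod n) ≠ 0 := by
    rw [Ne, ZMod.natCast_eq_zero_iff]
    exact Nat.not_dvd_of_pos_of_lt (hpos k) (by linarith [hlt k])
  cases x <;> simp [signedJumps, h]

theorem signedJumps_injective (hpos : ∀ k, 0 < a k) (hlt : ∀ k, 2 * a k < n)
    (ha : Function.Injective a) :
    Function.Injective (signedJumps n a) := by
  have hinj : Function.Injective fun k => (a k : ZMod n) := fun k l hkl => ha <| by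
    simpa [ZMod.natCast_eq_natCast_iff', Nat.mod_eq_of_lt (by linarith [hlt k] : a k < n),
      Nat.mod_eq_of_lt (by linarith [hlt l] : a l < n)] using hkl
  refine hinj.sumElim (neg_injective.comp hinj) fun k l hkl => ?_
  have : ((a k + a l : ℕ) : ZMod n) = 0 := by push_cast; exact eq_neg_iff_add_eq_zero.mp hkl
  rw [ZMod.natCast_eq_zero_iff] at this
  exact Nat.not_dvd_of_pos_of_lt (by linarith [hpos k]) (by linarith [hlt k, hlt l]) this

open scoped Classical in
noncomputable def lapSymbol (n p : ℕ) (a : Fin p → ℕ) : ZMod n → ℝ := fun t =>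
  if t = 0 then 2 * p else if ∃ k, t = (a k : ZMod n) ∨ -t = (a k : ZMod n) then -1 else 0

noncomputable def lapCirculantEigenvalue (n p : ℕ) (a : Fin p → ℕ) (m : ℕ) : ℝ :=
  2 * (p - ∑ k, cos (2 * π * m * a k / n))

theorem lapSymbol_eq_sub (hpos : ∀ k, 0 < a k) (hlt : ∀ k, 2 * a k < n) (t : ZMod n) :
    lapSymbol n p a t =
      (if t = 0 then 2 * (p : ℝ) else 0) -
        if t ∈ Finset.univ.image (signedJumps n a) then 1 else 0 := by
  have hmem : t ∈ Finset.univ.image (signedJumps n a) ↔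
      ∃ k, t = (a k : ZMod n) ∨ -t = (a k : ZMod n) := by
    simp only [Finset.mem_image, Finset.mem_univ, true_and, Sum.exists, signedJumps,
      Sum.elim_inl, Sum.elim_inr, exists_or]
    exact or_congr (exists_congr fun k => eq_comm)
      (exists_congr fun k => ⟨fun h => by rw [← h, neg_neg], fun h => by rw [← h, neg_neg]⟩)
  by_cases ht : t = 0
  · subst ht
    have : (0 : ZMod n) ∉ Finset.univ.image (signedJumps n a) :=
      Finset.mem_image.not.mpr fun ⟨x, _, hx⟩ => signedJumps_ne_zero hpos hlt x hx
    simp [lapSymbol, this]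
  · simp only [lapSymbol, ht, hmem, ↓reduceIte]
    split_ifs <;> norm_num

variable [NeZero n]

theorem lapCirculant_eq_circulant : lapCirculant n p a = circulant (lapSymbol n p a) := by
  ext u v
  simp only [lapCirculant, lapSymbol, circulant_apply, sub_eq_zero, neg_sub]

theorem dft_lapSymbol (ha : Function.Injective a) (hpos : ∀ k, 0 < a k)
    (hlt : ∀ k, 2 * a k < n) :
    𝓕 (fun t => (lapSymbol n p a t : ℂ)) =
      fun k => (lapCirculantEigenvalue n p a k.val : ℂ) := by
  ext k
  have hcos (i : Fin p) : stdAddChar ((a i : ZMod n) * k) + stdAddChar (-((a i : ZMod n) * k)) =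
      (2 * cos (2 * π * k.val * a i / n) : ℝ) := by
    have hak : (a i : ZMod n) * k = ((a i * k.val : ℕ) : ZMod n) := by
      push_cast
      rw [ZMod.natCast_zmod_val]
    rw [hak, stdAddChar_add_stdAddChar_neg]
    push_cast
    ring_nf
  calc 𝓕 (fun t => (lapSymbol n p a t : ℂ)) k
      = ∑ t, ((if t = 0 then 2 * (p : ℂ) else 0) * stdAddChar (-(t * k)) -
          if t ∈ Finset.univ.image (signedJumps n a) then stdAddChar (-(t * k)) else 0) := by
        refine Finset.sum_congr rfl fun t _ => ?_
        simp only [lapSymbol_eq_sub hpos hlt, smul_eq_mul]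
        split_ifs <;> push_cast <;> ring
    _ = 2 * p - ∑ x, stdAddChar (-(signedJumps n a x * k)) := by
        rw [Finset.sum_sub_distrib, Finset.sum_ite_mem, Finset.univ_inter,
          Finset.sum_image fun x _ y _ h => signedJumps_injective hpos hlt ha h]
        simp
    _ = 2 * p - ∑ i, (stdAddChar ((a i : ZMod n) * k) + stdAddChar (-((a i : ZMod n) * k))) := by
        simp [Fintype.sum_sum_type, signedJumps, Finset.sum_add_distrib, add_comm]
    _ = lapCirculantEigenvalue n p a k.val := by
        simp only [hcos, lapCirculantEigenvalue]
        push_cast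
        rw [mul_sub, Finset.mul_sum]

theorem charpoly_lapCirculant (ha : Function.Injective a) (hpos : ∀ k, 0 < a k)
    (hlt : ∀ k, 2 * a k < n) :
    (lapCirculant n p a).charpoly =
      ∏ m ∈ Finset.range n, (X - C (lapCirculantEigenvalue n p a m)) := by
  rw [lapCirculant_eq_circulant, charpoly_circulant_of_dft_eq_ofReal (dft_lapSymbol ha hpos hlt)]
  refine Finset.prod_nbij (·.val) (fun k _ => by simp [ZMod.val_lt])
    (fun k _ l _ h => ZMod.val_injective n h)
    (fun m hm => ⟨m, by simp, ZMod.val_cast_of_lt (by simpa using hm)⟩) fun _ _ => rfl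

theorem lapCirculantEigenvalue_eq_zero_iff (hconn : Nat.Coprime n (Finset.univ.gcd a))
    {m : ℕ} (hm : m < n) : lapCirculantEigenvalue n p a m = 0 ↔ m = 0 := by
  have hcos (k : Fin p) : cos (2 * π * m * a k / n) = 1 ↔ n ∣ m * a k := by
    rw [← Real.cos_two_pi_mul_natCast_div_eq_one_iff (NeZero.ne n)]
    push_cast
    ring_nf
  calc lapCirculantEigenvalue n p a m = 0
      ↔ ∑ k, cos (2 * π * m * a k / n) = ∑ _k : Fin p, (1 : ℝ) := by
        rw [lapCirculantEigenvalue, mul_eq_zero, sub_eq_zero]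
        simp only [two_ne_zero, false_or, Finset.sum_const, Finset.card_univ, Fintype.card_fin,
          nsmul_eq_mul, mul_one]
        exact eq_comm
    _ ↔ ∀ k, n ∣ m * a k := by
        rw [Finset.sum_eq_sum_iff_of_le fun k _ => cos_le_one _]
        simp only [Finset.mem_univ, forall_const, hcos]
    _ ↔ n ∣ m * Finset.univ.gcd a := by
        rw [← normalize_eq m, ← Finset.gcd_mul_left, Finset.dvd_gcd_iff]
        simp
    _ ↔ m = 0 := by
        rw [hconn.dvd_mul_right]
        exact ⟨fun h => Nat.eq_zero_of_dvd_of_lt h hm, fun h => h ▸ dvd_zero n⟩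

theorem filter_range_lapCirculantEigenvalue_ne_zero (hconn : Nat.Coprime n (Finset.univ.gcd a)) :
    {m ∈ Finset.range n | lapCirculantEigenvalue n p a m ≠ 0} = Finset.Ioo 0 n := by
  ext m
  simp only [Finset.mem_filter, Finset.mem_range, Finset.mem_Ioo]
  constructor
  · rintro ⟨hm, h0⟩
    exact ⟨Nat.pos_of_ne_zero (mt (lapCirculantEigenvalue_eq_zero_iff hconn hm).2 h0), hm⟩
  · rintro ⟨h0, hm⟩
    exact ⟨hm, mt (lapCirculantEigenvalue_eq_zero_iff hconn hm).1 h0.ne'⟩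

theorem lapCirculantEigenvalue_sub_self {m : ℕ} (hm : m ≤ n) :
    lapCirculantEigenvalue n p a (n - m) = lapCirculantEigenvalue n p a m := by
  have hcos (k : Fin p) : cos (2 * π * (n - m : ℕ) * a k / n) = cos (2 * π * m * a k / n) := by
    have hn : (n : ℝ) ≠ 0 := Nat.cast_ne_zero.mpr (NeZero.ne n)
    rw [Nat.cast_sub hm, ← cos_nat_mul_two_pi_sub _ (a k)]
    congr 1
    field_simp
    ring
  simp only [lapCirculantEigenvalue, hcos]

end Laplacian

/-- For the connected circulant graph `C_n(a_1,…,a_p)` with `n` odd and `a_p < n/2`,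
the product of the nonzero Laplacian eigenvalues (with multiplicity) equals
`2^{n-1} · Π_{j=1}^{(n-1)/2} (p - Σ_k cos(2π j a_k/n))²`. -/
theorem prod_nonzero_eigenvalues_lapCirculant (n p : ℕ) [NeZero n] (hodd : Odd n)
    (a : Fin p → ℕ) (hmono : StrictMono a) (hpos : ∀ k, 1 ≤ a k)
    (hlt : ∀ k, (a k : ℝ) < n / 2)
    (hconn : Nat.gcd n (Finset.univ.gcd a) = 1) :
    (((lapCirculant n p a).charpoly.roots).filter (· ≠ 0)).prod =
      2 ^ (n - 1) *
        ∏ j ∈ Finset.Icc 1 ((n - 1) / 2),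
          ((p : ℝ) - ∑ k, Real.cos (2 * π * j * a k / n)) ^ 2 := by
  have hlt' (k : Fin p) : 2 * a k < n := by
    have := hlt k
    exact_mod_cast (by linarith : (2 * a k : ℝ) < n)
  rw [charpoly_lapCirculant hmono.injective hpos hlt', prod_filter_ne_zero_roots_prod_X_sub_C,
    filter_range_lapCirculantEigenvalue_ne_zero hconn,
    Finset.prod_Ioo_zero_eq_prod_Icc_sq_of_odd hodd
      fun _ hm => lapCirculantEigenvalue_sub_self hm.le]
  simp only [lapCirculantEigenvalue, mul_pow, Finset.prod_mul_distrib, Finset.prod_const,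
    Nat.card_Icc]
  rw [← pow_mul]
  congr 2
  obtain ⟨r, rfl⟩ := hodd
  omega
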